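/- For 0 < q < p ≤ 1, n ∈ ℕ, and x ∈ [0,1], D_n^{p,q}(e₂, x) = (p+q) p^{n+1} [n]_{p,q} x / ([n+2]_{p,q}[n+3]_{p,q}) + ([n]_{p,q} - p^{n-1}) p² q [n]_{p,q} x² / ([n+2]_{p,q}[n+3]_{p,q}), where e₂(t) = t². -/

import Mathlib

/-!
The `k`-th summand of `D_n^{p,q}(t², x)` is a `(p,q)`-Beta integral
`∫₀¹ t^a (1 ⊖ qt)^b d_{p,q}t = p^{(b+1 choose 2) + ab} [a]! [b]! / [a+b+1]!`
(by induction on `b`, starting from `∫₀¹ t^a d_{p,q}t = 1/[a+1]`), and it collapses to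
`b_{n,k}(1,x) p^{2(n-k+1)} [k][k+1] / ([n+2][n+3])`. Splitting `[k][k+1]` into the falling
factorials `[k]` and `[k][k-1]` leaves the factorial moments
`∑ₖ b_{n,k}(1,x) p^{j(n-k)} [k][k-1]⋯[k-j+1] = [n][n-1]⋯[n-j+1] xʲ`, which follow from the
partition of unity `∑ₖ b_{n,k}(1,x) = 1` by the absorption identity
`[k+1] [n+1 choose k+1] = [n+1] [n choose k]`.
-/

noncomputable section

/-- The (p,q)-number [n]_{p,q} = (p^n - q^n)/(p - q). -/
def pqNum (p q : ℝ) (n : ℕ) : ℝ := (p ^ n - q ^ n) / (p - q)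

/-- The (p,q)-factorial [n]_{p,q}!. -/
def pqFactorial (p q : ℝ) (n : ℕ) : ℝ := ∏ k ∈ Finset.range n, pqNum p q (k + 1)

/-- The (p,q)-binomial coefficient. -/
def pqBinom (p q : ℝ) (n k : ℕ) : ℝ :=
  pqFactorial p q n / (pqFactorial p q (n - k) * pqFactorial p q k)

/-- The (p,q)-power basis (a ⊖ b)^n_{p,q} = ∏_{j=0}^{n-1} (p^j a - q^j b). -/
def pqPow (p q a b : ℝ) (n : ℕ) : ℝ := ∏ j ∈ Finset.range n, (p ^ j * a - q ^ j * b)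

/-- The (p,q)-derivative. -/
def pqDeriv (p q : ℝ) (f : ℝ → ℝ) (x : ℝ) : ℝ := (f (p * x) - f (q * x)) / ((p - q) * x)

/-- The (p,q)-integral of f over [0,1] (case 0 < q < p). -/
def pqInt (p q : ℝ) (f : ℝ → ℝ) : ℝ :=
  (p - q) * ∑' k : ℕ, (q ^ k / p ^ (k + 1)) * f (q ^ k / p ^ (k + 1))

/-- The (p,q)-Beta function B_{p,q}(m,n) = ∫₀¹ x^{m-1} (1 ⊖ qx)^{n-1} d_{p,q}x. -/
def pqBeta (p q : ℝ) (m n : ℕ) : ℝ :=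
  pqInt p q (fun x => x ^ (m - 1) * pqPow p q 1 (q * x) (n - 1))

/-- The (p,q)-Gamma function: Γ_{p,q}(n+1) = [n]_{p,q}!. -/
def pqGamma (p q : ℝ) (n : ℕ) : ℝ := pqFactorial p q (n - 1)

/-- The (p,q)-Bernstein basis b_{n,k}^{p,q}(1,x). -/
def bBasis (p q : ℝ) (n k : ℕ) (x : ℝ) : ℝ :=
  pqBinom p q n k * p ^ (k * (k - 1) / 2) / p ^ (n * (n - 1) / 2) * x ^ k *
    pqPow p q 1 x (n - k)

/-- The kernel b_{n,k}^{p,q}(t) = [n choose k] t^k (1 ⊖ qt)^{n-k}. -/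
def bKernel (p q : ℝ) (n k : ℕ) (t : ℝ) : ℝ :=
  pqBinom p q n k * t ^ k * pqPow p q 1 (q * t) (n - k)

/-- The (p,q)-Bernstein operator B_{n,p,q}(f,x). -/
def pqBernstein (p q : ℝ) (n : ℕ) (f : ℝ → ℝ) (x : ℝ) : ℝ :=
  ∑ k ∈ Finset.range (n + 1),
    bBasis p q n k x * f (p ^ (n - k) * pqNum p q k / pqNum p q n)

/-- The (p,q)-Bernstein-Durrmeyer operator D_n^{p,q}(f,x). -/
def pqDurrmeyer (p q : ℝ) (n : ℕ) (f : ℝ → ℝ) (x : ℝ) : ℝ :=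
  pqNum p q (n + 1) *
    ∑ k ∈ Finset.Icc 1 n, (p ^ ((n - k + 1) * (n + k) / 2))⁻¹ * bBasis p q n k x *
      pqInt p q (fun t => bKernel p q n (k - 1) t * f t)
  + bBasis p q n 0 x * f 0

open Finset

section PQCalculus

variable {p q : ℝ}

lemma choose_two_succ (k : ℕ) : (k + 1).choose 2 = k + k.choose 2 := by
  rw [Nat.choose_succ_succ', Nat.choose_one_right]

lemma pqNum_zero : pqNum p q 0 = 0 := by simp [pqNum]

lemma pqNum_add (hpq : p ≠ q) (a b : ℕ) :
    pqNum p q (a + b) = p ^ a * pqNum p q b + q ^ b * pqNum p q a := by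
  have : p - q ≠ 0 := sub_ne_zero.mpr hpq
  unfold pqNum
  field_simp
  ring

lemma pqNum_succ (hpq : p ≠ q) (m : ℕ) : pqNum p q (m + 1) = p ^ m + q * pqNum p q m := by
  have : p - q ≠ 0 := sub_ne_zero.mpr hpq
  unfold pqNum
  field_simp
  ring

lemma pqNum_pos (hq : 0 ≤ q) (hqp : q < p) {m : ℕ} (hm : m ≠ 0) : 0 < pqNum p q m :=
  div_pos (sub_pos.mpr (pow_lt_pow_left₀ hqp hq hm)) (sub_pos.mpr hqp)

lemma pqFactorial_zero : pqFactorial p q 0 = 1 := prod_range_zero _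

lemma pqFactorial_succ (m : ℕ) :
    pqFactorial p q (m + 1) = pqFactorial p q m * pqNum p q (m + 1) :=
  prod_range_succ _ m

lemma pqFactorial_pos (hq : 0 ≤ q) (hqp : q < p) (m : ℕ) : 0 < pqFactorial p q m :=
  prod_pos fun k _ => pqNum_pos hq hqp k.succ_ne_zero

lemma pqBinom_zero_right (hq : 0 ≤ q) (hqp : q < p) (n : ℕ) : pqBinom p q n 0 = 1 := by
  simp [pqBinom, pqFactorial_zero, (pqFactorial_pos hq hqp n).ne']

lemma pqBinom_self (hq : 0 ≤ q) (hqp : q < p) (n : ℕ) : pqBinom p q n n = 1 := by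
  simp [pqBinom, pqFactorial_zero, (pqFactorial_pos hq hqp n).ne']

lemma pqBinom_succ_succ (hq : 0 ≤ q) (hqp : q < p) {n k : ℕ} (hk : k < n) :
    pqBinom p q (n + 1) (k + 1) =
      p ^ (k + 1) * pqBinom p q n (k + 1) + q ^ (n - k) * pqBinom p q n k := by
  obtain ⟨m, rfl⟩ := Nat.exists_eq_add_of_lt hk
  have e1 : k + m + 1 + 1 - (k + 1) = m + 1 := by omega
  have e2 : k + m + 1 - (k + 1) = m := by omega
  have e3 : k + m + 1 - k = m + 1 := by omega
  have hsum := pqNum_add hqp.ne' (k + 1) (m + 1)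
  rw [show k + 1 + (m + 1) = k + m + 1 + 1 by ring] at hsum
  rw [pqBinom, pqBinom, pqBinom, e1, e2, e3, pqFactorial_succ (k + m + 1), hsum,
    pqFactorial_succ m, pqFactorial_succ k]
  have := pqFactorial_pos hq hqp m
  have := pqFactorial_pos hq hqp k
  have := pqNum_pos hq hqp m.succ_ne_zero
  have := pqNum_pos hq hqp k.succ_ne_zero
  field_simp

lemma pqBinom_succ_mul_pqNum (hq : 0 ≤ q) (hqp : q < p) (m k : ℕ) :
    pqBinom p q (m + 1) (k + 1) * pqNum p q (k + 1) = pqNum p q (m + 1) * pqBinom p q m k := by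
  simp only [pqBinom, Nat.add_sub_add_right, pqFactorial_succ m, pqFactorial_succ k]
  have := pqFactorial_pos hq hqp (m - k)
  have := pqFactorial_pos hq hqp k
  have := pqNum_pos hq hqp k.succ_ne_zero
  field_simp

lemma pqPow_succ (a b : ℝ) (m : ℕ) :
    pqPow p q a b (m + 1) = pqPow p q a b m * (p ^ m * a - q ^ m * b) :=
  prod_range_succ _ m

end PQCalculus

section Bernstein

variable {p q : ℝ}

lemma bBasis_eq (n k : ℕ) (x : ℝ) :
    bBasis p q n k x =
      pqBinom p q n k * p ^ k.choose 2 * x ^ k * pqPow p q 1 x (n - k) / p ^ n.choose 2 := by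
  rw [bBasis, Nat.choose_two_right, Nat.choose_two_right]
  ring

lemma pqBinom_succ_succ_mul_pqPow (hq : 0 ≤ q) (hqp : q < p) {n k : ℕ} (hk : k < n) (x : ℝ) :
    pqBinom p q (n + 1) (k + 1) * p ^ (k + 1).choose 2 * x ^ (k + 1) *
        pqPow p q 1 x (n + 1 - (k + 1)) =
      p ^ (k + 1) * (pqBinom p q n (k + 1) * p ^ (k + 1).choose 2 * x ^ (k + 1) *
          pqPow p q 1 x (n - (k + 1) + 1)) +
        q ^ (n - k) * (pqBinom p q n k * p ^ (k + 1).choose 2 * x ^ (k + 1) *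
          pqPow p q 1 x (n - k)) := by
  rw [pqBinom_succ_succ hq hqp hk, Nat.add_sub_add_right, Nat.sub_add_eq, Nat.sub_add_cancel]
  · ring
  · omega

/-- The `(p,q)`-binomial theorem behind the partition of unity `∑ₖ b_{n,k}(1,x) = 1`. -/
lemma sum_pqBinom_mul_pqPow (hq : 0 ≤ q) (hqp : q < p) (x : ℝ) (n : ℕ) :
    ∑ k ∈ range (n + 1), pqBinom p q n k * p ^ k.choose 2 * x ^ k * pqPow p q 1 x (n - k) =
      p ^ n.choose 2 := by
  induction n with
  | zero => simp [pqBinom_zero_right hq hqp, pqPow]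
  | succ n ih =>
    set F : ℕ → ℝ := fun k =>
      p ^ k * (pqBinom p q n k * p ^ k.choose 2 * x ^ k * pqPow p q 1 x (n - k + 1))
    set G : ℕ → ℝ := fun k =>
      q ^ (n - k) * (pqBinom p q n k * p ^ (k + 1).choose 2 * x ^ (k + 1) * pqPow p q 1 x (n - k))
    have hFG : ∀ k ∈ range (n + 1), F k + G k =
        p ^ n * (pqBinom p q n k * p ^ k.choose 2 * x ^ k * pqPow p q 1 x (n - k)) := by
      intro k hk
      have hpk : p ^ k * p ^ (n - k) = p ^ n := by
        rw [← pow_add, Nat.add_sub_cancel' (Nat.lt_succ_iff.mp (mem_range.mp hk))]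
      simp only [F, G, pqPow_succ, choose_two_succ, pow_add]
      linear_combination
        pqBinom p q n k * p ^ k.choose 2 * x ^ k * pqPow p q 1 x (n - k) * hpk
    have hmid : ∀ k ∈ range n,
        pqBinom p q (n + 1) (k + 1) * p ^ (k + 1).choose 2 * x ^ (k + 1) *
          pqPow p q 1 x (n + 1 - (k + 1)) = F (k + 1) + G k :=
      fun k hk => pqBinom_succ_succ_mul_pqPow hq hqp (mem_range.mp hk) x
    have h0 : pqBinom p q (n + 1) 0 * p ^ (0 : ℕ).choose 2 * x ^ 0 * pqPow p q 1 x (n + 1 - 0) =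
        F 0 := by
      simp [F, pqBinom_zero_right hq hqp]
    have hlast : pqBinom p q (n + 1) (n + 1) * p ^ (n + 1).choose 2 * x ^ (n + 1) *
        pqPow p q 1 x (n + 1 - (n + 1)) = G n := by
      simp [G, pqBinom_self hq hqp]
    calc _ = F 0 + ∑ k ∈ range n, (F (k + 1) + G k) + G n := by
          rw [sum_range_succ, sum_range_succ', sum_congr rfl hmid, h0, hlast]
          ring
      _ = ∑ k ∈ range (n + 1), (F k + G k) := by
          rw [sum_add_distrib, sum_add_distrib, sum_range_succ' F, sum_range_succ G]
          ring
      _ = p ^ (n + 1).choose 2 := by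
          rw [sum_congr rfl hFG, ← mul_sum, ih, ← pow_add, choose_two_succ]

lemma sum_bBasis (hq : 0 ≤ q) (hqp : q < p) (n : ℕ) (x : ℝ) :
    ∑ k ∈ range (n + 1), bBasis p q n k x = 1 := by
  have hp : p ^ n.choose 2 ≠ 0 := pow_ne_zero _ (hq.trans_lt hqp).ne'
  simp_rw [bBasis_eq, ← sum_div, sum_pqBinom_mul_pqPow hq hqp, div_self hp]

lemma pqNum_mul_bBasis_succ (hq : 0 ≤ q) (hqp : q < p) {m k : ℕ} (hk : k ≤ m) (x : ℝ) :
    p ^ (m - k) * pqNum p q (k + 1) * bBasis p q (m + 1) (k + 1) x =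
      pqNum p q (m + 1) * x * bBasis p q m k x := by
  obtain ⟨d, rfl⟩ := Nat.exists_eq_add_of_le hk
  have hp : p ≠ 0 := (hq.trans_lt hqp).ne'
  have habs := pqBinom_succ_mul_pqNum hq hqp (k + d) k
  simp only [bBasis_eq, Nat.add_sub_add_right, Nat.add_sub_cancel_left, choose_two_succ]
  field_simp
  linear_combination
    p ^ (k + d) * p ^ k.choose 2 * p ^ (k + d).choose 2 * x ^ (k + 1) * pqPow p q 1 x d * habs

/-- The `(p,q)`-falling factorial `[k] [k-1] ⋯ [k-j+1]`; it vanishes for `k < j` as `[0] = 0`. -/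
def pqDescFactorial (p q : ℝ) (k j : ℕ) : ℝ := ∏ i ∈ range j, pqNum p q (k - i)

lemma pqDescFactorial_zero_left {j : ℕ} (hj : j ≠ 0) : pqDescFactorial p q 0 j = 0 :=
  prod_eq_zero (mem_range.mpr (Nat.pos_of_ne_zero hj)) (by simp [pqNum_zero])

lemma pqDescFactorial_succ_succ (k j : ℕ) :
    pqDescFactorial p q (k + 1) (j + 1) = pqNum p q (k + 1) * pqDescFactorial p q k j := by
  simp [pqDescFactorial, prod_range_succ', mul_comm]

lemma pqDescFactorial_one (k : ℕ) : pqDescFactorial p q k 1 = pqNum p q k := by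
  simp [pqDescFactorial]

lemma pqDescFactorial_two (k : ℕ) :
    pqDescFactorial p q k 2 = pqNum p q k * pqNum p q (k - 1) := by
  simp [pqDescFactorial, prod_range_succ]

lemma sum_bBasis_mul_pqDescFactorial (hq : 0 ≤ q) (hqp : q < p) (j n : ℕ) (x : ℝ) :
    ∑ k ∈ range (n + 1), bBasis p q n k x * (p ^ (j * (n - k)) * pqDescFactorial p q k j) =
      pqDescFactorial p q n j * x ^ j := by
  induction j generalizing n with
  | zero => simp [pqDescFactorial, sum_bBasis hq hqp]
  | succ j ih =>
    cases n with
    | zero => simp [pqDescFactorial_zero_left]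
    | succ m =>
      have hterm : ∀ k ∈ range (m + 1),
          bBasis p q (m + 1) (k + 1) x *
              (p ^ ((j + 1) * (m + 1 - (k + 1))) * pqDescFactorial p q (k + 1) (j + 1)) =
            pqNum p q (m + 1) * x *
              (bBasis p q m k x * (p ^ (j * (m - k)) * pqDescFactorial p q k j)) := by
        intro k hk
        rw [pqDescFactorial_succ_succ, Nat.add_sub_add_right, add_one_mul, pow_add]
        linear_combination p ^ (j * (m - k)) * pqDescFactorial p q k j *
          pqNum_mul_bBasis_succ hq hqp (Nat.lt_succ_iff.mp (mem_range.mp hk)) x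
      rw [sum_range_succ', sum_congr rfl hterm, ← mul_sum, ih,
        pqDescFactorial_zero_left j.succ_ne_zero, pqDescFactorial_succ_succ]
      ring

end Bernstein

section Integral

variable {p q : ℝ}

lemma pqNode_eq (hp : p ≠ 0) (k : ℕ) : q ^ k / p ^ (k + 1) = p⁻¹ * (q / p) ^ k := by
  rw [div_pow, pow_succ']
  field_simp

lemma summable_pqInt (hq : 0 ≤ q) (hqp : q < p) {f : ℝ → ℝ}
    (hf : ContinuousOn f (Set.Icc 0 p⁻¹)) :
    Summable fun k : ℕ => q ^ k / p ^ (k + 1) * f (q ^ k / p ^ (k + 1)) := by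
  have hp : 0 < p := hq.trans_lt hqp
  have hr : 0 ≤ q / p := div_nonneg hq hp.le
  have hr1 : q / p < 1 := (div_lt_one hp).mpr hqp
  obtain ⟨C, hC⟩ := isCompact_Icc.exists_bound_of_continuousOn hf
  refine .of_norm_bounded ((summable_geometric_of_lt_one hr hr1).mul_left (p⁻¹ * C)) fun k => ?_
  have hpow : (q / p) ^ k ≤ 1 := pow_le_one₀ hr hr1.le
  have hnode : p⁻¹ * (q / p) ^ k ∈ Set.Icc 0 p⁻¹ :=
    ⟨by positivity, mul_le_of_le_one_right (inv_nonneg.mpr hp.le) hpow⟩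
  rw [pqNode_eq hp.ne', norm_mul, Real.norm_of_nonneg hnode.1]
  calc p⁻¹ * (q / p) ^ k * ‖f (p⁻¹ * (q / p) ^ k)‖ ≤ p⁻¹ * (q / p) ^ k * C := by
        gcongr
        exact hC _ hnode
    _ = p⁻¹ * C * (q / p) ^ k := by ring

lemma pqInt_sub (hq : 0 ≤ q) (hqp : q < p) {f g : ℝ → ℝ}
    (hf : ContinuousOn f (Set.Icc 0 p⁻¹)) (hg : ContinuousOn g (Set.Icc 0 p⁻¹)) :
    pqInt p q (fun t => f t - g t) = pqInt p q f - pqInt p q g := by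
  simp only [pqInt, mul_sub, (summable_pqInt hq hqp hf).tsum_sub (summable_pqInt hq hqp hg)]

lemma pqInt_const_mul (c : ℝ) (f : ℝ → ℝ) :
    pqInt p q (fun t => c * f t) = c * pqInt p q f := by
  simp only [pqInt, mul_left_comm _ c, tsum_mul_left]

lemma pqInt_pow (hq : 0 ≤ q) (hqp : q < p) (a : ℕ) :
    pqInt p q (fun t => t ^ a) = (pqNum p q (a + 1))⁻¹ := by
  have hp : 0 < p := hq.trans_lt hqp
  have hr : 0 ≤ (q / p) ^ (a + 1) := by positivity
  have hr1 : (q / p) ^ (a + 1) < 1 :=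
    pow_lt_one₀ (by positivity) ((div_lt_one hp).mpr hqp) a.succ_ne_zero
  have hterm : ∀ k : ℕ, q ^ k / p ^ (k + 1) * (q ^ k / p ^ (k + 1)) ^ a =
      p⁻¹ ^ (a + 1) * ((q / p) ^ (a + 1)) ^ k := fun k => by
    rw [pqNode_eq hp.ne', ← pow_succ', mul_pow, ← pow_mul, ← pow_mul, mul_comm k]
  have hgap : 0 < p ^ (a + 1) - q ^ (a + 1) :=
    sub_pos.mpr (pow_lt_pow_left₀ hqp hq a.succ_ne_zero)
  rw [pqInt, tsum_congr hterm, tsum_mul_left, tsum_geometric_of_lt_one hr hr1, pqNum, inv_pow,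
    div_pow]
  field_simp

/-- The `(p,q)`-Beta integral `B_{p,q}(a+1, b+1)`. -/
lemma pqInt_pow_mul_pqPow (hq : 0 ≤ q) (hqp : q < p) (b a : ℕ) :
    pqInt p q (fun t => t ^ a * pqPow p q 1 (q * t) b) =
      p ^ ((b + 1).choose 2 + a * b) *
        (pqFactorial p q a * pqFactorial p q b / pqFactorial p q (a + b + 1)) := by
  induction b generalizing a with
  | zero =>
    have := (pqFactorial_pos hq hqp a).ne'
    simp [pqPow, pqInt_pow hq hqp, pqFactorial_succ, pqFactorial_zero]
    field_simp
  | succ b ih =>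
    have hcont : ∀ (e : ℝ) (c : ℕ),
        ContinuousOn (fun t => e * (t ^ c * pqPow p q 1 (q * t) b)) (Set.Icc 0 p⁻¹) :=
      fun e c => by unfold pqPow; fun_prop
    have hsplit : (fun t => t ^ a * pqPow p q 1 (q * t) (b + 1)) = fun t =>
        p ^ b * (t ^ a * pqPow p q 1 (q * t) b) -
          q ^ (b + 1) * (t ^ (a + 1) * pqPow p q 1 (q * t) b) := by
      funext t
      rw [pqPow_succ]
      ring
    rw [hsplit, pqInt_sub hq hqp (hcont _ a) (hcont _ (a + 1)), pqInt_const_mul,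
      pqInt_const_mul, ih, ih]
    have hkey := pqNum_add hqp.ne' (a + 1) (b + 1)
    rw [show a + 1 + (b + 1) = a + b + 1 + 1 by ring] at hkey
    rw [show a + 1 + b + 1 = a + b + 1 + 1 by ring, show a + (b + 1) + 1 = a + b + 1 + 1 by ring,
      pqFactorial_succ (a + b + 1), hkey, pqFactorial_succ a, pqFactorial_succ b,
      choose_two_succ (b + 1)]
    have := pqFactorial_pos hq hqp (a + b + 1)
    have := pqNum_pos hq hqp (a + b + 1).succ_ne_zero
    rw [hkey] at this
    field_simp
    ring

end Integral

section Durrmeyer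

variable {p q : ℝ}

lemma succ_mul_two_mul_add_div_two (d b : ℕ) :
    (d + 1) * (2 * b + d) / 2 = (d + 1) * b + (d + 1).choose 2 := by
  rw [Nat.choose_two_right, show (d + 1) * (2 * b + d) = 2 * ((d + 1) * b) + (d + 1) * d by ring,
    Nat.mul_add_div two_pos, Nat.add_sub_cancel]

lemma pqNum_mul_pqInt_bKernel_mul_sq (hq : 0 ≤ q) (hqp : q < p) {n k : ℕ} (hk : 1 ≤ k)
    (hkn : k ≤ n) :
    pqNum p q (n + 1) * (p ^ ((n - k + 1) * (n + k) / 2))⁻¹ *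
        pqInt p q (fun t => bKernel p q n (k - 1) t * t ^ 2) =
      p ^ (2 * (n - k + 1)) * (pqNum p q k * pqNum p q (k + 1)) /
        (pqNum p q (n + 2) * pqNum p q (n + 3)) := by
  obtain ⟨j, rfl⟩ := Nat.exists_eq_add_of_le' hk
  obtain ⟨d, rfl⟩ := Nat.exists_eq_add_of_le hkn
  have hd : j + 1 + d - (j + 1) + 1 = d + 1 := by omega
  have hkernel : (fun t => bKernel p q (j + 1 + d) (j + 1 - 1) t * t ^ 2) =
      fun t => pqBinom p q (j + 1 + d) j * (t ^ (j + 2) * pqPow p q 1 (q * t) (d + 1)) := by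
    funext t
    rw [bKernel, Nat.add_sub_cancel, show j + 1 + d - j = d + 1 by omega]
    ring
  have hexp : (d + 2).choose 2 + (j + 2) * (d + 1) =
      (d + 1) * (j + 1 + d + (j + 1)) / 2 + 2 * (d + 1) := by
    rw [show j + 1 + d + (j + 1) = 2 * (j + 1) + d by ring, succ_mul_two_mul_add_div_two,
      choose_two_succ (d + 1)]
    ring
  rw [hkernel, pqInt_const_mul, pqInt_pow_mul_pqPow hq hqp, hexp, hd, pqBinom,
    show j + 1 + d - j = d + 1 by omega]
  have hfj :
      pqFactorial p q (j + 2) = pqFactorial p q j * pqNum p q (j + 1) * pqNum p q (j + 2) := by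
    simp only [pqFactorial_succ]
  have hfn : pqFactorial p q (j + 2 + (d + 1) + 1) = pqFactorial p q (j + 1 + d) *
      pqNum p q (j + 1 + d + 1) * pqNum p q (j + 1 + d + 2) * pqNum p q (j + 1 + d + 3) := by
    simp only [show j + 2 + (d + 1) + 1 = j + 1 + d + 3 by ring, pqFactorial_succ]
  rw [hfj, hfn, pow_add]
  have := pqFactorial_pos hq hqp (j + 1 + d)
  have := pqFactorial_pos hq hqp j
  have := pqFactorial_pos hq hqp (d + 1)
  have := pqNum_pos hq hqp (by omega : j + 1 + d + 1 ≠ 0)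
  have := pqNum_pos hq hqp (by omega : j + 1 + d + 2 ≠ 0)
  have := pqNum_pos hq hqp (by omega : j + 1 + d + 3 ≠ 0)
  have : p ^ ((d + 1) * (j + 1 + d + (j + 1)) / 2) ≠ 0 := pow_ne_zero _ (hq.trans_lt hqp).ne'
  field_simp

lemma pow_mul_pqNum_mul_pqNum_succ (hpq : p ≠ q) {n k : ℕ} (hk : k ≤ n) :
    p ^ (2 * (n - k + 1)) * (pqNum p q k * pqNum p q (k + 1)) =
      (p + q) * p ^ (n + 1) * (p ^ (1 * (n - k)) * pqDescFactorial p q k 1) +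
        p ^ 2 * q ^ 2 * (p ^ (2 * (n - k)) * pqDescFactorial p q k 2) := by
  rw [pqDescFactorial_one, pqDescFactorial_two]
  rcases k with _ | i
  · simp [pqNum_zero]
  obtain ⟨e, rfl⟩ := Nat.exists_eq_add_of_lt hk
  rw [show i + e + 1 - (i + 1) = e by omega, Nat.add_sub_cancel, pqNum_succ hpq (i + 1),
    pqNum_succ hpq i]
  ring

lemma pqDurrmeyer_sq_eq_sum (hq : 0 ≤ q) (hqp : q < p) (n : ℕ) (x : ℝ) :
    pqDurrmeyer p q n (fun t => t ^ 2) x = ∑ k ∈ range (n + 1),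
      bBasis p q n k x * (p ^ (2 * (n - k + 1)) * (pqNum p q k * pqNum p q (k + 1))) /
        (pqNum p q (n + 2) * pqNum p q (n + 3)) := by
  rw [pqDurrmeyer, zero_pow two_ne_zero, mul_zero, add_zero, mul_sum]
  refine sum_subset_zero_on_sdiff (fun k hk => ?_) (fun k hk => ?_) (fun k hk => ?_)
  · exact mem_range.mpr (Nat.lt_succ_of_le (mem_Icc.mp hk).2)
  · obtain rfl : k = 0 := by simp at hk; omega
    simp [pqNum_zero]
  · obtain ⟨hk1, hkn⟩ := mem_Icc.mp hk
    rw [mul_div_assoc, ← pqNum_mul_pqInt_bKernel_mul_sq hq hqp hk1 hkn]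
    ring

end Durrmeyer

theorem pqDurrmeyer_e2_general (p q : ℝ) (hq : 0 < q) (hqp : q < p)
    (n : ℕ) (x : ℝ) :
    pqDurrmeyer p q n (fun t => t ^ 2) x =
      (p + q) * p ^ (n + 1) * pqNum p q n * x / (pqNum p q (n + 2) * pqNum p q (n + 3)) +
        (pqNum p q n - p ^ (n - 1)) * p ^ 2 * q * pqNum p q n * x ^ 2 /
          (pqNum p q (n + 2) * pqNum p q (n + 3)) := by
  have hdecomp : ∀ k ∈ range (n + 1),
      bBasis p q n k x * (p ^ (2 * (n - k + 1)) * (pqNum p q k * pqNum p q (k + 1))) =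
        (p + q) * p ^ (n + 1) *
            (bBasis p q n k x * (p ^ (1 * (n - k)) * pqDescFactorial p q k 1)) +
          p ^ 2 * q ^ 2 * (bBasis p q n k x * (p ^ (2 * (n - k)) * pqDescFactorial p q k 2)) :=
    fun k hk => by
      rw [pow_mul_pqNum_mul_pqNum_succ hqp.ne' (Nat.lt_succ_iff.mp (mem_range.mp hk))]
      ring
  rw [pqDurrmeyer_sq_eq_sum hq.le hqp, ← sum_div, sum_congr rfl hdecomp, sum_add_distrib,
    ← mul_sum, ← mul_sum, sum_bBasis_mul_pqDescFactorial hq.le hqp,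
    sum_bBasis_mul_pqDescFactorial hq.le hqp,
    pqDescFactorial_one, pqDescFactorial_two]
  rcases n with _ | m
  · simp [pqNum_zero]
  rw [Nat.add_sub_cancel, pqNum_succ hqp.ne' m]
  ring

theorem pqDurrmeyer_e2 (p q : ℝ) (hq : 0 < q) (hqp : q < p) (hp : p ≤ 1)
    (n : ℕ) (x : ℝ) (hx : x ∈ Set.Icc (0 : ℝ) 1) :
    pqDurrmeyer p q n (fun t => t ^ 2) x =
      (p + q) * p ^ (n + 1) * pqNum p q n * x / (pqNum p q (n + 2) * pqNum p q (n + 3)) +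
        (pqNum p q n - p ^ (n - 1)) * p ^ 2 * q * pqNum p q n * x ^ 2 /
          (pqNum p q (n + 2) * pqNum p q (n + 3)) :=
  pqDurrmeyer_e2_general p q hq hqp n x
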